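/- Let G be a Hamiltonian finite simple graph on n > 3 vertices, where n is even, and let α be any magnetic potential on G. Then 2 ≤ λ_{n/2+1}(Δ_α^G) and 2 < λ_{n/2+2}(Δ_α^G). -/

import Mathlib

open Classical in
/-- The discrete magnetic Laplacian of a simple graph `G` on `Fin n` with magnetic
potential `α`. -/
noncomputable def magLap {n : ℕ} (G : SimpleGraph (Fin n)) (α : Fin n → Fin n → ℝ) :
    Matrix (Fin n) (Fin n) ℂ :=
  Matrix.of fun u v =>
    if u = v then ((G.neighborSet u).ncard : ℂ)
    else if G.Adj u v then -Complex.exp (α u v * Complex.I) else 0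

lemma magLap_isHermitian {n : ℕ} (G : SimpleGraph (Fin n)) (α : Fin n → Fin n → ℝ)
    (hα : ∀ u v, α v u = -α u v) : (magLap G α).IsHermitian := by
  rw [Matrix.IsHermitian]
  ext u v
  simp only [Matrix.conjTranspose_apply, magLap, Matrix.of_apply]
  by_cases huv : u = v
  · subst huv; simp
  · have hvu : ¬ v = u := fun h => huv h.symm
    rw [if_neg hvu, if_neg huv]
    by_cases hadj : G.Adj u v
    · rw [if_pos hadj.symm, if_pos hadj, star_neg]
      have h1 : star (Complex.exp ((α v u : ℂ) * Complex.I)) =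
          Complex.exp ((starRingEnd ℂ) ((α v u : ℂ) * Complex.I)) :=
        (Complex.exp_conj _).symm
      rw [h1]
      congr 1
      rw [hα u v]
      simp [map_mul, Complex.conj_ofReal, Complex.conj_I]
    · rw [if_neg (fun h => hadj h.symm), if_neg hadj, star_zero]

/-- The `k`-th smallest eigenvalue (1-indexed, with multiplicity) of a Hermitian
matrix, as an extended real number; `⊥` for `k = 0` and `⊤` for `k > n`. -/
noncomputable def lamb {n : ℕ} {A : Matrix (Fin n) (Fin n) ℂ} (hA : A.IsHermitian) (k : ℕ) :
    EReal :=
  if h : 1 ≤ k ∧ k ≤ n then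
    (((hA.eigenvalues ∘ Tuple.sort hA.eigenvalues) ⟨k - 1, by omega⟩ : ℝ) : EReal)
  else if k = 0 then ⊥ else ⊤

/-- The matching number of a graph: the maximal number of pairwise independent edges. -/
noncomputable def matchingNumber {n : ℕ} (G : SimpleGraph (Fin n)) : ℕ :=
  sSup {k : ℕ | ∃ M : G.Subgraph, M.IsMatching ∧ M.edgeSet.ncard = k}

/-!
Order the vertices along a Hamiltonian cycle `v₀, …, v_{n-1}`. The magnetic quadratic form
`⟪x, Δ_α x⟫ = ½ ∑_{u ~ v} |x_u - e^{iα(u,v)} x_v|²` dominates its restriction to the cycle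
edges, which split into the perfect matchings `{v_{2j} v_{2j+1}}` and `{v_{2j+1} v_{2j+2}}`.
On the subspace of codimension `n/2` cut out by `x_{v_{2j}} + e^{iα} x_{v_{2j+1}} = 0`, every
first-matching term equals `2|x_{v_{2j}}|² + 2|x_{v_{2j+1}}|²`, so the form is at least `2‖x‖²`
there, and by min-max at most `n/2` eigenvalues are `< 2`. Imposing also `x_{v₀} = 0`, equality
would make all second-matching terms vanish, so `|x|` would be constant along the cycle, hence
zero; thus at most `n/2 + 1` eigenvalues are `≤ 2`.
-/

open Finset Module Matrix
open scoped InnerProductSpace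

section EigenbasisCounting

open RCLike

variable {𝕜 E W ι : Type*} [RCLike 𝕜] [NormedAddCommGroup E] [InnerProductSpace 𝕜 E]
  [AddCommGroup W] [Module 𝕜 W] [FiniteDimensional 𝕜 W] [Fintype ι]
  {T : E →ₗ[𝕜] E} {b : OrthonormalBasis ι 𝕜 E} {μ : ι → ℝ}

theorem OrthonormalBasis.inner_map_eq_mul_inner (hb : ∀ i, T (b i) = (μ i : 𝕜) • b i)
    (x : E) (i : ι) : ⟪b i, T x⟫_𝕜 = μ i * ⟪b i, x⟫_𝕜 := by
  classical
  conv_lhs => rw [← b.sum_repr' x]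
  simp [hb, inner_sum, inner_smul_right, b.inner_eq_ite, mul_comm]

theorem OrthonormalBasis.re_inner_map_self_eq_sum (hb : ∀ i, T (b i) = (μ i : 𝕜) • b i)
    (x : E) : re ⟪x, T x⟫_𝕜 = ∑ i, μ i * ‖⟪b i, x⟫_𝕜‖ ^ 2 := by
  rw [← b.sum_inner_mul_inner, map_sum]
  refine Finset.sum_congr rfl fun i _ => ?_
  rw [b.inner_map_eq_mul_inner hb, mul_left_comm, ← inner_conj_symm, RCLike.conj_mul]
  norm_cast

theorem OrthonormalBasis.sub_re_inner_map_self_eq_sum (hb : ∀ i, T (b i) = (μ i : 𝕜) • b i)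
    (t : ℝ) (x : E) : t * ‖x‖ ^ 2 - re ⟪x, T x⟫_𝕜 = ∑ i, (t - μ i) * ‖⟪b i, x⟫_𝕜‖ ^ 2 := by
  simp only [b.re_inner_map_self_eq_sum hb, ← b.sum_sq_norm_inner_right x, Finset.mul_sum,
    ← Finset.sum_sub_distrib, sub_mul]

theorem OrthonormalBasis.exists_ne_zero_ker_inner_eq_zero (f : E →ₗ[𝕜] W) (p : ι → Prop)
    [DecidablePred p] (h : finrank 𝕜 W < #{i | p i}) :
    ∃ x, x ≠ 0 ∧ f x = 0 ∧ ∀ i, ¬ p i → ⟪b i, x⟫_𝕜 = 0 := by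
  have : FiniteDimensional 𝕜 E := b.toBasis.finiteDimensional_of_finite
  let g : E →ₗ[𝕜] W × ({i // ¬ p i} → 𝕜) := f.prod (LinearMap.pi fun i => innerₛₗ 𝕜 (b i))
  have hg : finrank 𝕜 (W × ({i // ¬ p i} → 𝕜)) < finrank 𝕜 E := by
    rw [finrank_prod, finrank_fintype_fun_eq_card, finrank_eq_card_basis b.toBasis,
      Fintype.card_subtype_compl, Fintype.card_subtype]
    have := card_le_univ ({i | p i} : Finset ι)
    omega
  obtain ⟨x, hx, hx0⟩ :=
    Submodule.exists_mem_ne_zero_of_ne_bot (LinearMap.ker_ne_bot_of_finrank_lt hg)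
  have hgx : g x = 0 := hx
  exact ⟨x, hx0, congrArg Prod.fst hgx, fun i hi => congrFun (congrArg Prod.snd hgx) ⟨i, hi⟩⟩

theorem OrthonormalBasis.card_lt_le_finrank (hb : ∀ i, T (b i) = (μ i : 𝕜) • b i)
    (f : E →ₗ[𝕜] W) (t : ℝ) (hf : ∀ x, f x = 0 → t * ‖x‖ ^ 2 ≤ re ⟪x, T x⟫_𝕜) :
    #{i | μ i < t} ≤ finrank 𝕜 W := by
  by_contra! h
  obtain ⟨x, hx0, hfx, hx⟩ := b.exists_ne_zero_ker_inner_eq_zero f _ h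
  have hterm : ∀ i, 0 ≤ (t - μ i) * ‖⟪b i, x⟫_𝕜‖ ^ 2 := fun i => by
    by_cases hi : μ i < t
    · exact mul_nonneg (by linarith) (by positivity)
    · simp [hx i hi]
  obtain ⟨i, hi⟩ : ∃ i, ⟪b i, x⟫_𝕜 ≠ 0 := by
    by_contra! h0
    exact hx0 (by simpa [h0] using (b.sum_repr' x).symm)
  have hμ : μ i < t := by_contra fun h' => hi (hx i h')
  have hpos : 0 < ∑ i, (t - μ i) * ‖⟪b i, x⟫_𝕜‖ ^ 2 :=
    Finset.sum_pos' (fun i _ => hterm i)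
      ⟨i, mem_univ i, mul_pos (by linarith) (by positivity)⟩
  rw [← b.sub_re_inner_map_self_eq_sum hb] at hpos
  linarith [hf x hfx]

theorem OrthonormalBasis.card_le_le_finrank (hb : ∀ i, T (b i) = (μ i : 𝕜) • b i)
    (f : E →ₗ[𝕜] W) (t : ℝ) (hf : ∀ x, x ≠ 0 → f x = 0 → t * ‖x‖ ^ 2 < re ⟪x, T x⟫_𝕜) :
    #{i | μ i ≤ t} ≤ finrank 𝕜 W := by
  by_contra! h
  obtain ⟨x, hx0, hfx, hx⟩ := b.exists_ne_zero_ker_inner_eq_zero f _ h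
  have hnonneg : 0 ≤ ∑ i, (t - μ i) * ‖⟪b i, x⟫_𝕜‖ ^ 2 :=
    Finset.sum_nonneg fun i _ => by
      by_cases hi : μ i ≤ t
      · exact mul_nonneg (by linarith) (by positivity)
      · simp [hx i hi]
  rw [← b.sub_re_inner_map_self_eq_sum hb] at hnonneg
  linarith [hf x hx0 hfx]

end EigenbasisCounting

section HermitianCounting

open RCLike

variable {𝕜 ι W : Type*} [RCLike 𝕜] [Fintype ι] [DecidableEq ι] [AddCommGroup W] [Module 𝕜 W]
  [FiniteDimensional 𝕜 W] {A : Matrix ι ι 𝕜}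

theorem Matrix.IsHermitian.toLpLin_eigenvectorBasis (hA : A.IsHermitian) (i : ι) :
    toLpLin 2 2 A (hA.eigenvectorBasis i) = (hA.eigenvalues i : 𝕜) • hA.eigenvectorBasis i := by
  ext1
  rw [ofLp_toLpLin, toLin'_apply, hA.mulVec_eigenvectorBasis, WithLp.ofLp_smul,
    RCLike.real_smul_eq_coe_smul (K := 𝕜)]

theorem Matrix.re_inner_toLpLin (A : Matrix ι ι 𝕜) (x : EuclideanSpace 𝕜 ι) :
    re ⟪x, toLpLin 2 2 A x⟫_𝕜 = re (star x.ofLp ⬝ᵥ A *ᵥ x.ofLp) := by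
  rw [EuclideanSpace.inner_eq_star_dotProduct, ofLp_toLpLin, toLin'_apply, dotProduct_comm]

theorem Matrix.IsHermitian.card_eigenvalues_lt_le (hA : A.IsHermitian) (f : (ι → 𝕜) →ₗ[𝕜] W)
    (t : ℝ) (hf : ∀ x, f x = 0 → t * ∑ i, ‖x i‖ ^ 2 ≤ re (star x ⬝ᵥ A *ᵥ x)) :
    #{i | hA.eigenvalues i < t} ≤ finrank 𝕜 W :=
  hA.eigenvectorBasis.card_lt_le_finrank hA.toLpLin_eigenvectorBasis
    (f ∘ₗ (WithLp.linearEquiv 2 𝕜 (ι → 𝕜)).toLinearMap) t fun x hx => by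
      rw [EuclideanSpace.norm_sq_eq, re_inner_toLpLin]
      exact hf _ hx

theorem Matrix.IsHermitian.card_eigenvalues_le_le (hA : A.IsHermitian) (f : (ι → 𝕜) →ₗ[𝕜] W)
    (t : ℝ) (hf : ∀ x, x ≠ 0 → f x = 0 → t * ∑ i, ‖x i‖ ^ 2 < re (star x ⬝ᵥ A *ᵥ x)) :
    #{i | hA.eigenvalues i ≤ t} ≤ finrank 𝕜 W :=
  hA.eigenvectorBasis.card_le_le_finrank hA.toLpLin_eigenvectorBasis
    (f ∘ₗ (WithLp.linearEquiv 2 𝕜 (ι → 𝕜)).toLinearMap) t fun x hx0 hx => by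
      rw [EuclideanSpace.norm_sq_eq, re_inner_toLpLin]
      exact hf _ (by simpa using hx0) hx

end HermitianCounting

section SortedCount

variable {n : ℕ}

theorem Tuple.add_one_le_card_filter_of_sort {β : Type*} [LinearOrder β] {f : Fin n → β}
    (p : β → Prop) [DecidablePred p]
    (hp : ∀ ⦃a b⦄, a ≤ b → p b → p a) (k : Fin n) (hk : p (f (Tuple.sort f k))) :
    (k : ℕ) + 1 ≤ #{i | p (f i)} := by
  have hsub : Iic k ⊆ ({j | p (f (Tuple.sort f j))} : Finset (Fin n)) := fun j hj => by
    simp only [mem_filter, mem_univ, true_and]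
    exact hp (Tuple.monotone_sort f (mem_Iic.mp hj)) hk
  calc (k : ℕ) + 1 = #(Iic k) := (Fin.card_Iic k).symm
    _ ≤ #{j | p (f (Tuple.sort f j))} := card_le_card hsub
    _ = #{i | p (f i)} := card_equiv (Tuple.sort f) (by simp)

variable {A : Matrix (Fin n) (Fin n) ℂ}

theorem lamb_add_one (hA : A.IsHermitian) {k : ℕ} (hk : k < n) :
    lamb hA (k + 1) = ((hA.eigenvalues (Tuple.sort hA.eigenvalues ⟨k, hk⟩) : ℝ) : EReal) := by
  rw [lamb, dif_pos (by omega)]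
  rfl

theorem le_lamb_add_one_of_card_lt_le (hA : A.IsHermitian) {k : ℕ} (hk : k < n) {t : ℝ}
    (h : #{i | hA.eigenvalues i < t} ≤ k) : (t : EReal) ≤ lamb hA (k + 1) := by
  rw [lamb_add_one hA hk, EReal.coe_le_coe_iff]
  by_contra! ht
  have := Tuple.add_one_le_card_filter_of_sort (· < t) (fun _ _ hab hb => hab.trans_lt hb) _ ht
  simp only at this
  omega

theorem lt_lamb_add_one_of_card_le_le (hA : A.IsHermitian) {k : ℕ} (hk : k < n) {t : ℝ}
    (h : #{i | hA.eigenvalues i ≤ t} ≤ k) : (t : EReal) < lamb hA (k + 1) := by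
  rw [lamb_add_one hA hk, EReal.coe_lt_coe_iff]
  by_contra! ht
  have := Tuple.add_one_le_card_filter_of_sort (· ≤ t) (fun _ _ hab hb => hab.trans hb) _ ht
  simp only at this
  omega

end SortedCount

section CyclicOrder

theorem SimpleGraph.IsHamiltonian.exists_bijective_adj_add_one {V : Type*} [Fintype V]
    [DecidableEq V] {G : SimpleGraph V} (hG : G.IsHamiltonian) {n : ℕ}
    (hn : Fintype.card V = n) (h1 : 1 < n) :
    ∃ e : ZMod n → V, Function.Bijective e ∧ ∀ i, G.Adj (e i) (e (i + 1)) := by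
  have : NeZero n := ⟨by omega⟩
  obtain ⟨a, p, hp⟩ := hG (by omega)
  have hlen : p.length = n := hp.length_eq.trans hn
  have hwrap : ∀ k ≤ n, p.getVert (k : ZMod n).val = p.getVert k := fun k hk => by
    rw [ZMod.val_natCast]
    rcases hk.lt_or_eq with hk | rfl
    · rw [Nat.mod_eq_of_lt hk]
    · rw [Nat.mod_self, p.getVert_zero, ← hlen, p.getVert_length]
  refine ⟨fun i => p.getVert i.val, ?_, fun i => ?_⟩
  · refine (Fintype.bijective_iff_surjective_and_card _).mpr ⟨fun v => ?_, by simp [hn]⟩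
    obtain ⟨k, hk, hkn⟩ := p.mem_support_iff_exists_getVert.mp (hp.mem_support v)
    exact ⟨k, (hwrap k (hlen ▸ hkn)).trans hk⟩
  · have hi : i.val < n := ZMod.val_lt i
    have hsucc : i + 1 = ((i.val + 1 : ℕ) : ZMod n) := by push_cast [ZMod.natCast_zmod_val]; rfl
    simp only [hsucc, hwrap _ hi]
    exact p.adj_getVert_succ (hlen ▸ hi)

end CyclicOrder

namespace ZMod

variable {n : ℕ} [NeZero n]

theorem bijective_two_mul_add (hn : Even n) :
    Function.Bijective fun p : Fin (n / 2) × Fin 2 => 2 * ((p.1 : ℕ) : ZMod n) + (p.2 : ℕ) := by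
  refine (Fintype.bijective_iff_injective_and_card _).mpr
    ⟨?_, by simp [Nat.div_two_mul_two_of_even hn]⟩
  rintro ⟨j, k⟩ ⟨j', k'⟩ h
  have hval : ∀ (j : Fin (n / 2)) (k : Fin 2), (2 * ((j : ℕ) : ZMod n) + (k : ℕ)).val = 2 * j + k :=
    fun j k => by
      rw [← Nat.cast_two, ← Nat.cast_mul, ← Nat.cast_add, val_natCast_of_lt (by omega)]
  have := congrArg val h
  simp only [hval] at this
  ext <;> simp <;> omega

theorem sum_eq_sum_two_mul_add {M : Type*} [AddCommMonoid M] (hn : Even n) (f : ZMod n → M) :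
    ∑ i, f i = ∑ j : Fin (n / 2), (f (2 * (j : ℕ)) + f (2 * (j : ℕ) + 1)) := by
  rw [← Fintype.sum_bijective _ (bijective_two_mul_add hn) _ f fun _ => rfl,
    Fintype.sum_prod_type]
  simp [Fin.sum_univ_two]

theorem eq_apply_zero_of_apply_add_one {α : Type*} {g : ZMod n → α}
    (hg : ∀ i, g (i + 1) = g i) (i : ZMod n) : g i = g 0 := by
  rw [← natCast_zmod_val i]
  induction i.val with
  | zero => simp
  | succ k ih => rw [Nat.cast_succ, hg, ih]

end ZMod

section MagneticEnergy

open Complex ComplexConjugate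

variable {n : ℕ}

theorem normSq_exp_ofReal_mul_I_mul (θ : ℝ) (z : ℂ) : normSq (exp (θ * I) * z) = normSq z := by
  rw [normSq_mul, normSq_eq_norm_sq (exp _), norm_exp_ofReal_mul_I, one_pow, one_mul]

noncomputable def magEnergy (α : Fin n → Fin n → ℝ) (x : Fin n → ℂ) (u v : Fin n) : ℝ :=
  normSq (x u - exp (α u v * I) * x v)

theorem magEnergy_comm {α : Fin n → Fin n → ℝ} (hα : ∀ u v, α v u = -α u v) (x : Fin n → ℂ)
    (u v : Fin n) : magEnergy α x v u = magEnergy α x u v := by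
  have hunit : exp (α v u * I) * exp (α u v * I) = 1 := by
    rw [← exp_add, hα]; push_cast; ring_nf; exact exp_zero
  have : x v - exp (α v u * I) * x u = -exp (α v u * I) * (x u - exp (α u v * I) * x v) := by
    linear_combination (-x v) * hunit
  rw [magEnergy, magEnergy, this, neg_mul, normSq_neg, normSq_exp_ofReal_mul_I_mul]

theorem magEnergy_eq (α : Fin n → Fin n → ℝ) (x : Fin n → ℂ) (u v : Fin n) :
    magEnergy α x u v =
      normSq (x u) + normSq (x v) - 2 * (conj (x u) * (exp (α u v * I) * x v)).re := by
  rw [magEnergy, normSq_sub, normSq_exp_ofReal_mul_I_mul, ← conj_re, map_mul, conj_conj]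

theorem magEnergy_nonneg (α : Fin n → Fin n → ℝ) (x : Fin n → ℂ) (u v : Fin n) :
    0 ≤ magEnergy α x u v :=
  normSq_nonneg _

theorem magEnergy_eq_of_add_eq_zero {α : Fin n → Fin n → ℝ} {x : Fin n → ℂ} {u v : Fin n}
    (h : x u + exp (α u v * I) * x v = 0) :
    magEnergy α x u v = 2 * normSq (x u) + 2 * normSq (x v) := by
  have hv : normSq (x v) = normSq (x u) := by
    rw [eq_neg_of_add_eq_zero_left h, normSq_neg, normSq_exp_ofReal_mul_I_mul]
  rw [magEnergy, show x u - exp (α u v * I) * x v = 2 * x u by linear_combination -h, normSq_mul,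
    hv]
  norm_num
  ring

open Classical in
theorem magLap_apply (G : SimpleGraph (Fin n)) (α : Fin n → Fin n → ℝ) (u v : Fin n) :
    magLap G α u v = (if u = v then ((G.neighborSet u).ncard : ℂ) else 0) -
      if G.Adj u v then exp (α u v * I) else 0 := by
  by_cases huv : u = v
  · subst huv; simp [magLap]
  · by_cases hadj : G.Adj u v <;> simp [magLap, huv, hadj]

open Classical in
theorem re_star_dotProduct_magLap_mulVec (G : SimpleGraph (Fin n)) (α : Fin n → Fin n → ℝ)
    (x : Fin n → ℂ) : (star x ⬝ᵥ magLap G α *ᵥ x).re =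
      (∑ u, ∑ v, if G.Adj u v then magEnergy α x u v else 0) / 2 := by
  have hdeg : ∀ u, ((G.neighborSet u).ncard : ℝ) * normSq (x u) =
      ∑ v, if G.Adj u v then normSq (x u) else 0 := fun u => by
    rw [← sum_filter, sum_const, nsmul_eq_mul, Set.ncard_eq_toFinset_card']
    congr 3
    ext v
    simp
  have hrow : ∀ u, (star x u * ∑ v, magLap G α u v * x v).re =
      ((G.neighborSet u).ncard : ℝ) * normSq (x u) -
        ∑ v, if G.Adj u v then (conj (x u) * (exp (α u v * I) * x v)).re else 0 := fun u => by
    simp only [magLap_apply, sub_mul, ite_mul, zero_mul, sum_sub_distrib, sum_ite_eq, mem_univ,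
      if_true, mul_sub, sub_re, mul_sum, mul_ite, mul_zero, re_sum, apply_ite re, zero_re,
      Pi.star_apply, star_def]
    rw [mul_left_comm, ← normSq_eq_conj_mul_self]
    norm_cast
  have hswap : ∑ u, ∑ v, (if G.Adj u v then normSq (x v) else 0) =
      ∑ u, ∑ v, if G.Adj u v then normSq (x u) else 0 := by
    rw [sum_comm]
    simp only [G.adj_comm]
  have hsplit : ∀ (p : Prop) [Decidable p] (a b c : ℝ),
      (if p then a + b - 2 * c else 0) = (if p then a else 0) + (if p then b else 0) -
        2 * if p then c else 0 := fun p _ a b c => by split_ifs <;> ring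
  simp only [dotProduct, mulVec, re_sum, hrow, hdeg, magEnergy_eq, hsplit, sum_add_distrib,
    sum_sub_distrib, ← mul_sum, hswap]
  ring

end MagneticEnergy

section MagneticCycle

open Complex

variable {n : ℕ}

noncomputable def magMatchingMap (α : Fin n → Fin n → ℝ) (e : ZMod n → Fin n) :
    (Fin n → ℂ) →ₗ[ℂ] Fin (n / 2) → ℂ :=
  LinearMap.pi fun j => LinearMap.proj (e (2 * (j : ℕ))) +
    exp (α (e (2 * (j : ℕ))) (e (2 * (j : ℕ) + 1)) * I) • LinearMap.proj (e (2 * (j : ℕ) + 1))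

variable [NeZero n] {G : SimpleGraph (Fin n)} {α : Fin n → Fin n → ℝ}
  {e : ZMod n → Fin n}

theorem sum_magEnergy_cycle_le (hα : ∀ u v, α v u = -α u v) (he : Function.Bijective e)
    (hadj : ∀ i, G.Adj (e i) (e (i + 1))) (h2 : (2 : ZMod n) ≠ 0) (x : Fin n → ℂ) :
    ∑ i, magEnergy α x (e i) (e (i + 1)) ≤ (star x ⬝ᵥ magLap G α *ᵥ x).re := by
  classical
  have hnonneg : ∀ u v, 0 ≤ if G.Adj u v then magEnergy α x u v else 0 := fun u v => by
    split_ifs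
    exacts [magEnergy_nonneg α x u v, le_rfl]
  -- `2 ≠ 0` makes the cycle neighbours `e (i + 1)` and `e (i - 1)` of `e i` distinct
  have hvertex : ∀ i, magEnergy α x (e i) (e (i + 1)) + magEnergy α x (e i) (e (i - 1)) ≤
      ∑ v, if G.Adj (e i) v then magEnergy α x (e i) v else 0 := fun i => by
    have hne : e (i + 1) ≠ e (i - 1) := fun h => h2 <| by
      linear_combination he.1 h
    have hprev : G.Adj (e i) (e (i - 1)) := by simpa using (hadj (i - 1)).symm
    simpa [hadj i, hprev] using
      add_le_sum (fun v _ => hnonneg (e i) v) (mem_univ _) (mem_univ _) hne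
  have hback : ∑ i, magEnergy α x (e i) (e (i - 1)) = ∑ i, magEnergy α x (e i) (e (i + 1)) := by
    rw [← Equiv.sum_comp (Equiv.addRight (1 : ZMod n))]
    simp [magEnergy_comm hα]
  rw [re_star_dotProduct_magLap_mulVec, le_div_iff₀ two_pos,
    ← Fintype.sum_bijective e he _ _ fun _ => rfl]
  calc (∑ i, magEnergy α x (e i) (e (i + 1))) * 2
      = ∑ i, (magEnergy α x (e i) (e (i + 1)) + magEnergy α x (e i) (e (i - 1))) := by
        rw [sum_add_distrib, hback, mul_two]
    _ ≤ _ := sum_le_sum fun i _ => hvertex i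

theorem two_mul_sum_normSq_add_le (hα : ∀ u v, α v u = -α u v) (hn : Even n)
    (he : Function.Bijective e) (hadj : ∀ i, G.Adj (e i) (e (i + 1))) (h2 : (2 : ZMod n) ≠ 0)
    {x : Fin n → ℂ} (hx : magMatchingMap α e x = 0) :
    2 * ∑ v, normSq (x v) +
        ∑ j : Fin (n / 2), magEnergy α x (e (2 * (j : ℕ) + 1)) (e (2 * (j : ℕ) + 2)) ≤
      (star x ⬝ᵥ magLap G α *ᵥ x).re := by
  have hpair : ∀ j : Fin (n / 2), magEnergy α x (e (2 * (j : ℕ))) (e (2 * (j : ℕ) + 1)) =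
      2 * normSq (x (e (2 * (j : ℕ)))) + 2 * normSq (x (e (2 * (j : ℕ) + 1))) := fun j =>
    magEnergy_eq_of_add_eq_zero (by simpa [magMatchingMap] using congrFun hx j)
  calc 2 * ∑ v, normSq (x v) +
        ∑ j : Fin (n / 2), magEnergy α x (e (2 * (j : ℕ) + 1)) (e (2 * (j : ℕ) + 2))
      = ∑ i, magEnergy α x (e i) (e (i + 1)) := by
        rw [← Fintype.sum_bijective e he _ _ fun _ => rfl, ZMod.sum_eq_sum_two_mul_add hn,
          ZMod.sum_eq_sum_two_mul_add hn, mul_sum, ← sum_add_distrib]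
        refine sum_congr rfl fun j _ => ?_
        rw [hpair, add_assoc (2 * _ : ZMod n) 1 1, one_add_one_eq_two]
        ring
    _ ≤ _ := sum_magEnergy_cycle_le hα he hadj h2 x

theorem two_mul_sum_normSq_le (hα : ∀ u v, α v u = -α u v) (hn : Even n)
    (he : Function.Bijective e) (hadj : ∀ i, G.Adj (e i) (e (i + 1))) (h2 : (2 : ZMod n) ≠ 0)
    {x : Fin n → ℂ} (hx : magMatchingMap α e x = 0) :
    2 * ∑ v, normSq (x v) ≤ (star x ⬝ᵥ magLap G α *ᵥ x).re :=
  le_of_add_le_of_nonneg_left (two_mul_sum_normSq_add_le hα hn he hadj h2 hx)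
    (sum_nonneg fun _ _ => magEnergy_nonneg _ _ _ _)

theorem eq_zero_of_re_le_two_mul_sum_normSq (hα : ∀ u v, α v u = -α u v) (hn : Even n)
    (he : Function.Bijective e) (hadj : ∀ i, G.Adj (e i) (e (i + 1))) (h2 : (2 : ZMod n) ≠ 0)
    {x : Fin n → ℂ} (hx : magMatchingMap α e x = 0) (hx0 : x (e 0) = 0)
    (hle : (star x ⬝ᵥ magLap G α *ᵥ x).re ≤ 2 * ∑ v, normSq (x v)) : x = 0 := by
  have hodd : ∑ j : Fin (n / 2), magEnergy α x (e (2 * (j : ℕ) + 1)) (e (2 * (j : ℕ) + 2)) = 0 :=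
    le_antisymm (by linarith [two_mul_sum_normSq_add_le hα hn he hadj h2 hx])
      (sum_nonneg fun _ _ => magEnergy_nonneg _ _ _ _)
  rw [sum_eq_zero_iff_of_nonneg fun _ _ => magEnergy_nonneg _ _ _ _] at hodd
  -- each cycle edge lies in one of the two perfect matchings, so `|x|` is constant along the cycle
  have hstep : ∀ i, normSq (x (e (i + 1))) = normSq (x (e i)) := fun i => by
    obtain ⟨⟨j, k⟩, rfl⟩ := (ZMod.bijective_two_mul_add hn).2 i
    fin_cases k
    · have h := eq_neg_of_add_eq_zero_left (by simpa [magMatchingMap] using congrFun hx j)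
      simp only [Nat.cast_zero, add_zero]
      rw [h, normSq_neg, normSq_exp_ofReal_mul_I_mul]
    · have h := sub_eq_zero.mp (normSq_eq_zero.mp (hodd j (mem_univ j)))
      simp only [Nat.cast_one, add_assoc, one_add_one_eq_two]
      rw [h, normSq_exp_ofReal_mul_I_mul]
  funext v
  obtain ⟨i, rfl⟩ := he.2 v
  have := ZMod.eq_apply_zero_of_apply_add_one (g := fun i => normSq (x (e i))) hstep i
  exact normSq_eq_zero.mp (this.trans (by rw [hx0, map_zero]))

end MagneticCycle

/-- A Hamiltonian graph on an even number `n > 3` of vertices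
satisfies `2 ≤ λ_{n/2+1}(Δ_α^G)` and `2 < λ_{n/2+2}(Δ_α^G)` for every magnetic
potential `α`. -/
theorem hamiltonian_even_eigenvalue_bounds {n : ℕ} (G : SimpleGraph (Fin n))
    (hn : 3 < n) (hne : Even n) (hham : G.IsHamiltonian)
    (α : Fin n → Fin n → ℝ) (hα : ∀ u v, α v u = -α u v) :
    ((2 : ℝ) : EReal) ≤ lamb (magLap_isHermitian G α hα) (n / 2 + 1) ∧
    ((2 : ℝ) : EReal) < lamb (magLap_isHermitian G α hα) (n / 2 + 2) := by
  have : NeZero n := ⟨by omega⟩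
  obtain ⟨e, he, hadj⟩ := hham.exists_bijective_adj_add_one (Fintype.card_fin n) (by omega)
  have h2 : (2 : ZMod n) ≠ 0 := by
    rw [← Nat.cast_two, Ne, ZMod.natCast_eq_zero_iff]
    exact Nat.not_dvd_of_pos_of_lt two_pos (by omega)
  set hA := magLap_isHermitian G α hα
  have hlt : #{i | hA.eigenvalues i < 2} ≤ n / 2 := by
    simpa using hA.card_eigenvalues_lt_le (magMatchingMap α e) 2 fun x hx => by
      simp only [Complex.sq_norm]
      exact two_mul_sum_normSq_le hα hne he hadj h2 hx
  have hle : #{i | hA.eigenvalues i ≤ 2} ≤ n / 2 + 1 := by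
    simpa using hA.card_eigenvalues_le_le ((magMatchingMap α e).prod (LinearMap.proj (e 0))) 2
      fun x hx0 hx => by
        simp only [Complex.sq_norm]
        by_contra! hre
        exact hx0 (eq_zero_of_re_le_two_mul_sum_normSq hα hne he hadj h2
          (congrArg Prod.fst hx) (congrArg Prod.snd hx) hre)
  exact ⟨le_lamb_add_one_of_card_lt_le hA (by omega) hlt,
    lt_lamb_add_one_of_card_le_le hA (by omega) hle⟩
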